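/- arXiv:2305.07091 — 3 statements merged into one kernel-verified Lean document; each statement's English description precedes it below -/
import Mathlib

section
/- Let τ(n) be a sequence of non-negative integer-valued random variables satisfying the unit growth property τ(n+1) ≤ τ(n) + 1. Suppose there exists a random variable τ̄ with E[τ̄^p] < ∞ for some p ∈ (0,1] such that P(τ̄ > m) ≥ P(τ(n) > m) for all m ≥ 0 and all n. Then for every ε ∈ (0,1), P(τ(n) > εn infinitely often) = 0. -/
/-!
Along the geometric times `m k = ⌊γ ^ k⌋` with `γ = 1 + ε / 2`, unit growth gives
`τ (m k) ≥ τ n - (n - m k)` for `m k ≤ n < m (k + 1)`, so `τ n > ε n` forces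
`τ (m k) > (1 + ε) m k - m (k + 1)`, which is of order `γ ^ k`. By stochastic domination
and Markov's inequality for `τ̄ ^ p` these events have probabilities `O(γ ^ (-p k))`,
a summable sequence, and Borel–Cantelli concludes.
-/

open MeasureTheory Filter

lemma Monotone.exists_le_lt_succ {m : ℕ → ℕ} (hm : Monotone m)
    (hm_top : Tendsto m atTop atTop) {j n : ℕ} (hjn : m j ≤ n) :
    ∃ k, j ≤ k ∧ m k ≤ n ∧ n < m (k + 1) := by
  classical
  have hex : ∃ i, n < m i := (hm_top.eventually_gt_atTop n).exists
  have hj : j < Nat.find hex := by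
    by_contra! h
    exact (Nat.find_spec hex).not_ge ((hm h).trans hjn)
  obtain ⟨k, hk⟩ := Nat.exists_eq_add_of_lt hj
  refine ⟨j + k, Nat.le_add_right j k, ?_, ?_⟩
  · exact not_lt.mp (Nat.find_min hex (by omega))
  · simpa only [← hk] using Nat.find_spec hex

lemma limsup_subset_limsup_of_blocks {α : Type*} {A B : ℕ → Set α} {m : ℕ → ℕ}
    (hm : Monotone m) (hm_top : Tendsto m atTop atTop)
    (hAB : ∀ᶠ k in atTop, ∀ n, m k ≤ n → n < m (k + 1) → A n ⊆ B k) :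
    limsup A atTop ⊆ limsup B atTop := by
  intro ω hω
  rw [mem_limsup_iff_frequently_mem, frequently_atTop] at hω ⊢
  obtain ⟨K₀, hK₀⟩ := eventually_atTop.mp hAB
  intro K
  obtain ⟨n, hn, hωn⟩ := hω (m (max K K₀))
  obtain ⟨k, hk, hkn, hnk⟩ := hm.exists_le_lt_succ hm_top hn
  exact ⟨k, le_of_max_le_left hk, hK₀ k (le_of_max_le_right hk) n hkn hnk hωn⟩

lemma le_add_sub_of_unit_growth {f : ℕ → ℕ} (hf : ∀ n, f (n + 1) ≤ f n + 1) {a b : ℕ}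
    (hab : a ≤ b) : f b ≤ f a + (b - a) := by
  induction b, hab using Nat.le_induction with
  | base => simp
  | succ n _ ih => have := hf n; omega

lemma sub_lt_of_unit_growth {f : ℕ → ℕ} (hf : ∀ n, f (n + 1) ≤ f n + 1) {ε : ℝ}
    (hε : 0 ≤ ε) {a b n : ℕ} (han : a ≤ n) (hnb : n < b) (hn : ε * n < f n) :
    (1 + ε) * a - b < f a := by
  have hgrowth : (f n : ℝ) ≤ f a + ((n - a : ℕ) : ℝ) := by
    exact_mod_cast le_add_sub_of_unit_growth hf han
  rw [Nat.cast_sub han] at hgrowth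
  have hεa : ε * a ≤ ε * n := mul_le_mul_of_nonneg_left (by exact_mod_cast han) hε
  have hnb' : (n : ℝ) < b := by exact_mod_cast hnb
  linarith

lemma eventually_le_floor_pow_gap {ε : ℝ} (hε : 0 < ε) :
    ∀ᶠ k : ℕ in atTop, ε / 4 * (1 + ε / 2) ^ k ≤
      (1 + ε) * ⌊(1 + ε / 2) ^ k⌋₊ - ⌊(1 + ε / 2) ^ (k + 1)⌋₊ := by
  have hγ : 1 < 1 + ε / 2 := by linarith
  filter_upwards
    [(tendsto_pow_atTop_atTop_of_one_lt hγ).eventually_ge_atTop (4 * (1 + ε) / ε)] with k hk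
  set x := (1 + ε / 2) ^ k
  have hx : 4 * (1 + ε) ≤ ε * x := by rwa [div_le_iff₀' hε] at hk
  have hlow : (1 + ε) * (x - 1) ≤ (1 + ε) * ⌊x⌋₊ :=
    mul_le_mul_of_nonneg_left (Nat.sub_one_lt_floor x).le (by linarith)
  have hup : (⌊(1 + ε / 2) ^ (k + 1)⌋₊ : ℝ) ≤ (1 + ε / 2) * x :=
    (Nat.floor_le (by positivity)).trans_eq (pow_succ' _ _)
  nlinarith

section Probability

variable {Ω : Type*} [MeasurableSpace Ω] {μ : Measure Ω}

lemma measure_lt_le_of_forall_nat {X Y : Ω → ℕ}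
    (h : ∀ m : ℕ, μ {ω | m < X ω} ≤ μ {ω | m < Y ω}) {t : ℝ} (ht : 0 ≤ t) :
    μ {ω | t < X ω} ≤ μ {ω | t < Y ω} := by
  simpa only [← Nat.floor_lt ht] using h ⌊t⌋₊

lemma measure_lt_le_ofReal_integral_rpow_div {X : Ω → ℝ} (hX : ∀ ω, 0 ≤ X ω) {p : ℝ}
    (hp : 0 < p) (hint : Integrable (fun ω => X ω ^ p) μ) {t : ℝ} (ht : 0 < t) :
    μ {ω | t < X ω} ≤ ENNReal.ofReal ((∫ ω, X ω ^ p ∂μ) / t ^ p) := by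
  have htp : 0 < t ^ p := Real.rpow_pos_of_pos ht p
  calc μ {ω | t < X ω}
      ≤ μ {ω | ENNReal.ofReal (t ^ p) ≤ ENNReal.ofReal (X ω ^ p)} :=
        measure_mono fun ω hω => ENNReal.ofReal_le_ofReal
          (Real.rpow_le_rpow ht.le (le_of_lt hω) hp.le)
    _ ≤ (∫⁻ ω, ENNReal.ofReal (X ω ^ p) ∂μ) / ENNReal.ofReal (t ^ p) :=
        meas_ge_le_lintegral_div hint.aemeasurable.ennreal_ofReal
          (ENNReal.ofReal_pos.mpr htp).ne' ENNReal.ofReal_ne_top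
    _ = ENNReal.ofReal ((∫ ω, X ω ^ p ∂μ) / t ^ p) := by
        rw [← ofReal_integral_eq_lintegral_ofReal hint
          (Eventually.of_forall fun ω => Real.rpow_nonneg (hX ω) p),
          ENNReal.ofReal_div_of_pos htp]

lemma measure_limsup_eq_zero_of_le_ofReal {s : ℕ → Set Ω} {b : ℕ → ℝ} (hb : Summable b)
    (hs : ∀ k, μ (s k) ≤ ENNReal.ofReal (b k)) : μ (limsup s atTop) = 0 :=
  measure_limsup_atTop_eq_zero <|
    ne_top_of_le_ne_top hb.tsum_ofReal_ne_top (ENNReal.tsum_le_tsum hs)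

end Probability

lemma summable_div_mul_pow_rpow (M : ℝ) {c γ p : ℝ} (hc : 0 < c) (hγ : 1 < γ) (hp : 0 < p) :
    Summable fun k : ℕ => M / (c * γ ^ k) ^ p := by
  have hγ0 : 0 ≤ γ := by linarith
  have hγp : 1 < γ ^ p := Real.one_lt_rpow hγ hp
  have hterm : ∀ k : ℕ, M / (c * γ ^ k) ^ p = M / c ^ p * (γ ^ p)⁻¹ ^ k := fun k => by
    rw [Real.mul_rpow hc.le (pow_nonneg hγ0 k), ← Real.rpow_pow_comm hγ0, inv_pow,
      div_mul_eq_div_div, div_eq_mul_inv _ ((γ ^ p) ^ k)]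
  simpa only [hterm] using (summable_geometric_of_lt_one (by positivity)
    (inv_lt_one_of_one_lt₀ hγp)).mul_left (M / c ^ p)

theorem stmt0_general {Ω : Type*} [MeasurableSpace Ω] (μ : Measure Ω)
    (τ : ℕ → Ω → ℕ)
    (hgrowth : ∀ n ω, τ (n + 1) ω ≤ τ n ω + 1)
    (τbar : Ω → ℕ)
    (p : ℝ) (hp0 : 0 < p)
    (hmom : Integrable (fun ω => ((τbar ω : ℝ)) ^ p) μ)
    (hdom : ∀ n m : ℕ, μ {ω | τ n ω > m} ≤ μ {ω | τbar ω > m}) :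
    ∀ ε : ℝ, 0 < ε → ε < 1 →
      μ (limsup (fun n => {ω | ((τ n ω : ℝ)) > ε * n}) atTop) = 0 := by
  intro ε hε0 _
  set γ : ℝ := 1 + ε / 2
  set m : ℕ → ℕ := fun k => ⌊γ ^ k⌋₊
  set M : ℝ := ∫ ω, (τbar ω : ℝ) ^ p ∂μ
  have hγ : 1 < γ := by simp only [γ]; linarith
  have hm : Monotone m := fun a b h => Nat.floor_mono (pow_le_pow_right₀ hγ.le h)
  have hm_top : Tendsto m atTop atTop :=
    tendsto_nat_floor_atTop.comp (tendsto_pow_atTop_atTop_of_one_lt hγ)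
  have hblocks : ∀ᶠ k in atTop, ∀ n, m k ≤ n → n < m (k + 1) →
      {ω | (τ n ω : ℝ) > ε * n} ⊆ {ω | ε / 4 * γ ^ k < τ (m k) ω} :=
    (eventually_le_floor_pow_gap hε0).mono fun k hk n hkn hnk ω hω =>
      hk.trans_lt (sub_lt_of_unit_growth (f := (τ · ω)) (hgrowth · ω) hε0.le hkn hnk hω)
  have htail : ∀ k, μ {ω | ε / 4 * γ ^ k < τ (m k) ω} ≤
      ENNReal.ofReal (M / (ε / 4 * γ ^ k) ^ p) := fun k =>
    (measure_lt_le_of_forall_nat (hdom (m k)) (by positivity)).trans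
      (measure_lt_le_ofReal_integral_rpow_div (fun _ => Nat.cast_nonneg _) hp0 hmom
        (by positivity))
  exact measure_mono_null (limsup_subset_limsup_of_blocks hm hm_top hblocks)
    (measure_limsup_eq_zero_of_le_ofReal
      (summable_div_mul_pow_rpow M (by positivity : 0 < ε / 4) hγ hp0) htail)

theorem stmt0 {Ω : Type*} [MeasurableSpace Ω] (μ : Measure Ω) [IsProbabilityMeasure μ]
    (τ : ℕ → Ω → ℕ) (hmeas : ∀ n, Measurable (τ n))
    (hgrowth : ∀ n ω, τ (n + 1) ω ≤ τ n ω + 1)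
    (τbar : Ω → ℕ) (hbarmeas : Measurable τbar)
    (p : ℝ) (hp0 : 0 < p) (hp1 : p ≤ 1)
    (hmom : Integrable (fun ω => ((τbar ω : ℝ)) ^ p) μ)
    (hdom : ∀ n m : ℕ, μ {ω | τ n ω > m} ≤ μ {ω | τbar ω > m}) :
    ∀ ε : ℝ, 0 < ε → ε < 1 →
      μ (limsup (fun n => {ω | ((τ n ω : ℝ)) > ε * n}) atTop) = 0 :=
  stmt0_general μ τ hgrowth τbar p hp0 hmom hdom
end

section
/- Under the hypotheses of the Gronwall-type inequality with varying lower limit (y_n ≤ b_n c_n + C Σ_{k=n-Δ_n}^{n-1} a_k y_k, sup b_n ≤ B, c_n monotone increasing, and the averaging condition), if additionally b_n → 0 and Σ_{k=n-Δ_n}^{n-1} a_k → 0 as n → ∞, then y_n / c_n → 0. -/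
/-!
A crude Grönwall bound `y n ≤ B * ∏ k < n, (1 + C * a k) * c n` controls the finitely many
indices below `N`. From `N` on, the averaging condition gives the window weight at most
`θ = 1 - exp (-C * t N) < 1`, so `M = max (B * ∏ k < N, (1 + C * a k)) (B * exp (C * t N))`
satisfies `B + θ * M ≤ M` and the bound `y n ≤ M * c n` propagates by strong induction.
Fed back into the recursion it gives `y n / c n ≤ b n + C * M * ∑ k ∈ [n - Δ n, n), a k → 0`.
-/

open Finset Filter

section WindowedGronwall

variable {y a c : ℕ → ℝ} {B C : ℝ}

theorem sum_Ico_mul_le_sum_mul_of_le_mul {M : ℝ} {m n : ℕ} (ha : ∀ k, 0 ≤ a k)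
    (hcmono : Monotone c) (hM : 0 ≤ M) (hy : ∀ k < n, y k ≤ M * c k) :
    ∑ k ∈ Ico m n, a k * y k ≤ (∑ k ∈ Ico m n, a k) * (M * c n) := by
  rw [sum_mul]
  gcongr with k hk
  · exact ha k
  have hkn : k < n := (mem_Ico.mp hk).2
  exact (hy k hkn).trans (by gcongr; exact hcmono hkn.le)

theorem le_mul_prod_mul_of_le_add_sum_range (ha : ∀ k, 0 ≤ a k) (hcmono : Monotone c)
    (hB : 0 ≤ B) (hC : 0 ≤ C) (hrec : ∀ n, y n ≤ B * c n + C * ∑ k ∈ range n, a k * y k)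
    (n : ℕ) : y n ≤ B * (∏ k ∈ range n, (1 + C * a k)) * c n := by
  set P : ℕ → ℝ := fun n => ∏ k ∈ range n, (1 + C * a k)
  have hP : ∀ k, 0 ≤ B * P k := fun k =>
    mul_nonneg hB (prod_nonneg fun j _ => by have := mul_nonneg hC (ha j); linarith)
  have hstep : ∀ k, C * a k * P k = P (k + 1) - P k := fun k => by
    simp only [P, prod_range_succ]; ring
  induction n using Nat.strong_induction_on with
  | _ n ih =>
    calc y n ≤ B * c n + C * ∑ k ∈ range n, a k * y k := hrec n
      _ ≤ B * c n + C * ∑ k ∈ range n, a k * (B * P k * c n) := by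
          gcongr with k hk
          · exact ha k
          have hkn := mem_range.mp hk
          exact (ih k hkn).trans (mul_le_mul_of_nonneg_left (hcmono hkn.le) (hP k))
      _ = B * c n * (1 + ∑ k ∈ range n, C * a k * P k) := by
          rw [mul_add, mul_one, mul_sum, mul_sum]
          congr 1
          exact sum_congr rfl fun k _ => by ring
      _ = B * P n * c n := by
          rw [sum_congr rfl fun k _ => hstep k, sum_range_sub]
          simp only [P, range_zero, prod_empty]
          ring

variable {s : ℕ → ℕ}

theorem le_mul_of_window_sum_le {N : ℕ} {θ M : ℝ} (ha : ∀ k, 0 ≤ a k) (hc : ∀ n, 0 ≤ c n)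
    (hcmono : Monotone c) (hC : 0 ≤ C) (hM0 : 0 ≤ M) (hM : B + θ * M ≤ M)
    (hrec : ∀ n, y n ≤ B * c n + C * ∑ k ∈ Ico (s n) n, a k * y k)
    (hθ : ∀ n ≥ N, C * ∑ k ∈ Ico (s n) n, a k ≤ θ) (hinit : ∀ n < N, y n ≤ M * c n) (n : ℕ) :
    y n ≤ M * c n := by
  induction n using Nat.strong_induction_on with
  | _ n ih =>
    rcases lt_or_ge n N with hn | hn
    · exact hinit n hn
    have hMc : 0 ≤ M * c n := mul_nonneg hM0 (hc n)
    calc y n ≤ B * c n + C * ∑ k ∈ Ico (s n) n, a k * y k := hrec n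
      _ ≤ B * c n + (C * ∑ k ∈ Ico (s n) n, a k) * (M * c n) := by
          rw [mul_assoc]
          gcongr
          exact sum_Ico_mul_le_sum_mul_of_le_mul ha hcmono hM0 ih
      _ ≤ B * c n + θ * (M * c n) := by gcongr; exact hθ n hn
      _ = (B + θ * M) * c n := by ring
      _ ≤ M * c n := by gcongr; exact hc n

theorem div_le_add_mul_window_sum {b : ℕ → ℝ} {M : ℝ} (ha : ∀ k, 0 ≤ a k) (hb : ∀ n, 0 ≤ b n)
    (hc : ∀ n, 0 ≤ c n) (hcmono : Monotone c) (hC : 0 ≤ C) (hM0 : 0 ≤ M)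
    (hrec : ∀ n, y n ≤ b n * c n + C * ∑ k ∈ Ico (s n) n, a k * y k)
    (hbound : ∀ n, y n ≤ M * c n) (n : ℕ) :
    y n / c n ≤ b n + C * M * ∑ k ∈ Ico (s n) n, a k := by
  rcases (hc n).eq_or_lt with hcn | hcn
  · rw [← hcn, div_zero]
    have := sum_nonneg fun k (_ : k ∈ Ico (s n) n) => ha k
    have := hb n
    positivity
  rw [div_le_iff₀ hcn]
  calc y n ≤ b n * c n + C * ∑ k ∈ Ico (s n) n, a k * y k := hrec n
    _ ≤ b n * c n + C * ((∑ k ∈ Ico (s n) n, a k) * (M * c n)) := by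
        gcongr
        exact sum_Ico_mul_le_sum_mul_of_le_mul ha hcmono hM0 fun k _ => hbound k
    _ = (b n + C * M * ∑ k ∈ Ico (s n) n, a k) * c n := by ring

end WindowedGronwall

theorem stmt4_general (y a b c : ℕ → ℝ) (Δ : ℕ → ℕ) (C B : ℝ)
    (hy : ∀ n, 0 ≤ y n) (ha : ∀ n, 0 ≤ a n) (hb : ∀ n, 0 ≤ b n)
    (hc : ∀ n, 0 ≤ c n) (hcmono : Monotone c) (hC : 0 < C)
    (t : ℕ → ℝ)
    (hrec : ∀ n, y n ≤ b n * c n + C * ∑ k ∈ Finset.Ico (n - Δ n) n, a k * y k)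
    (hbB : ∀ n, b n ≤ B)
    (N : ℕ)
    (hN : ∀ n ≥ N, C * ∑ k ∈ Finset.Ico (n - Δ n) n, a k ≤
        (Real.exp (C * t N) - 1) / Real.exp (C * t N))
    (hb0 : Tendsto b atTop (nhds 0))
    (hS0 : Tendsto (fun n => ∑ k ∈ Finset.Ico (n - Δ n) n, a k) atTop (nhds 0)) :
    Tendsto (fun n => y n / c n) atTop (nhds 0) := by
  have hB : 0 ≤ B := (hb 0).trans (hbB 0)
  have hrecB : ∀ n, y n ≤ B * c n + C * ∑ k ∈ Ico (n - Δ n) n, a k * y k := fun n =>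
    (hrec n).trans (by gcongr; exacts [hc n, hbB n])
  have hrecRange : ∀ n, y n ≤ B * c n + C * ∑ k ∈ range n, a k * y k := fun n =>
    (hrecB n).trans (by
      gcongr B * c n + C * ?_
      rw [range_eq_Ico]
      exact sum_le_sum_of_subset_of_nonneg (Ico_subset_Ico_left (Nat.zero_le _))
        fun k _ _ => mul_nonneg (ha k) (hy k))
  set E := Real.exp (C * t N)
  set P := ∏ k ∈ range N, (1 + C * a k)
  set M := max (B * P) (B * E)
  have hM0 : 0 ≤ M := (by positivity : 0 ≤ B * E).trans (le_max_right _ _)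
  -- `(E - 1) / E = 1 - 1 / E`, so `M ≥ B * E` is exactly what absorbs the recursion.
  have hM : B + (E - 1) / E * M ≤ M := by
    have hE : 0 < E := Real.exp_pos _
    have hBM : B ≤ M / E := (le_div_iff₀ hE).mpr (le_max_right _ _)
    calc B + (E - 1) / E * M = M - (M / E - B) := by field_simp; ring
      _ ≤ M := sub_le_self _ (sub_nonneg.mpr hBM)
  have hfac : ∀ k, 1 ≤ 1 + C * a k := fun k => le_add_of_nonneg_right (mul_nonneg hC.le (ha k))
  have hinit : ∀ n < N, y n ≤ M * c n := fun n hn =>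
    (le_mul_prod_mul_of_le_add_sum_range ha hcmono hB hC.le hrecRange n).trans (by
      gcongr
      · exact hc n
      refine (mul_le_mul_of_nonneg_left ?_ hB).trans (le_max_left _ _)
      exact prod_le_prod_of_subset_of_one_le (range_subset_range.mpr hn.le)
        (fun k _ => zero_le_one.trans (hfac k)) (fun k _ _ => hfac k))
  have hbound := le_mul_of_window_sum_le ha hc hcmono hC.le hM0 hM hrecB hN hinit
  refine squeeze_zero (fun n => div_nonneg (hy n) (hc n))
    (div_le_add_mul_window_sum ha hb hc hcmono hC.le hM0 hrec hbound) ?_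
  simpa using hb0.add (hS0.const_mul (C * M))

theorem stmt4 (y a b c : ℕ → ℝ) (Δ : ℕ → ℕ) (C B : ℝ)
    (hy : ∀ n, 0 ≤ y n) (ha : ∀ n, 0 ≤ a n) (hb : ∀ n, 0 ≤ b n)
    (hc : ∀ n, 0 ≤ c n) (hcmono : Monotone c) (hC : 0 < C) (hB : 0 < B)
    (t : ℕ → ℝ) (ht : ∀ n, t n = ∑ i ∈ Finset.Ico 1 n, a i)
    (hrec : ∀ n, y n ≤ b n * c n + C * ∑ k ∈ Finset.Ico (n - Δ n) n, a k * y k)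
    (hbB : ∀ n, b n ≤ B)
    (N : ℕ)
    (hN : ∀ n ≥ N, C * ∑ k ∈ Finset.Ico (n - Δ n) n, a k ≤
        (Real.exp (C * t N) - 1) / Real.exp (C * t N))
    (hb0 : Tendsto b atTop (nhds 0))
    (hS0 : Tendsto (fun n => ∑ k ∈ Finset.Ico (n - Δ n) n, a k) atTop (nhds 0)) :
    Tendsto (fun n => y n / c n) atTop (nhds 0) :=
  stmt4_general y a b c Δ C B hy ha hb hc hcmono hC t hrec hbB N hN hb0 hS0
end

section
/- Let τ(n) be integers with 0 ≤ τ(n) ≤ n and suppose for some p ∈ (0,1] and constants C > 0, ε ∈ (0,1), N ∈ ℕ: τ(k^{1/p}) ≤ ε k^{1/p} for all integers k ≥ N (interpreting k^{1/p} as ⌊k^{1/p}⌋), and τ satisfies the unit growth property τ(n+1) ≤ τ(n) + 1. Then there exist C' > 0 and N' such that τ(n) ≤ εn + (1-ε) C' n^{1-p} for all n ≥ N'. -/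
/-!
Put `a = 1 / p ≥ 1` and, for large `n`, `k = ⌊n ^ p⌋` and `m = ⌊k ^ a⌋ ≤ n`. Unit growth gives
`τ n ≤ τ m + (n - m) ≤ ε n + (1 - ε) (n - m)`, and since `n < (k + 1) ^ a`, Bernoulli's inequality
bounds the gap by `n - m < (k + 1) ^ a - k ^ a + 1 ≤ a 2 ^ (a - 1) k ^ (a - 1) + 1 = O(n ^ (1 - p))`.
-/

open Real Filter

theorem Nat.apply_le_apply_add_sub_of_succ_le {f : ℕ → ℕ} (hf : ∀ n, f (n + 1) ≤ f n + 1)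
    {m n : ℕ} (hmn : m ≤ n) : f n ≤ f m + (n - m) := by
  obtain ⟨i, rfl⟩ := Nat.exists_eq_add_of_le hmn
  induction i with
  | zero => simp
  | succ i ih => grind

theorem Nat.cast_apply_le_mul_add_sub {f : ℕ → ℕ} (hf : ∀ n, f (n + 1) ≤ f n + 1)
    {ε : ℝ} {m n : ℕ} (hmn : m ≤ n) (hm : (f m : ℝ) ≤ ε * m) :
    (f n : ℝ) ≤ ε * n + (1 - ε) * (n - m) := by
  have h : (f n : ℝ) ≤ f m + (n - m : ℕ) := by
    exact_mod_cast apply_le_apply_add_sub_of_succ_le hf hmn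
  rw [Nat.cast_sub hmn] at h
  linarith

namespace Real

theorem add_one_rpow_sub_rpow_le {x a : ℝ} (hx : 0 ≤ x) (ha : 1 ≤ a) :
    (x + 1) ^ a - x ^ a ≤ a * (x + 1) ^ (a - 1) := by
  have hx1 : 0 < x + 1 := by linarith
  have hbern := one_add_mul_self_le_rpow_one_add (s := -(x + 1)⁻¹)
    (by simpa using inv_le_one_of_one_le₀ (by linarith : 1 ≤ x + 1)) ha
  rw [show 1 + -(x + 1)⁻¹ = x / (x + 1) by field_simp; ring, div_rpow hx hx1.le,
    le_div_iff₀ (by positivity)] at hbern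
  rw [rpow_sub_one hx1.ne']
  have : (1 + a * -(x + 1)⁻¹) * (x + 1) ^ a = (x + 1) ^ a - a * ((x + 1) ^ a / (x + 1)) := by
    field_simp; ring
  linarith

theorem add_one_rpow_sub_rpow_le_mul_rpow {x a : ℝ} (hx : 1 ≤ x) (ha : 1 ≤ a) :
    (x + 1) ^ a - x ^ a ≤ a * 2 ^ (a - 1) * x ^ (a - 1) := by
  calc (x + 1) ^ a - x ^ a ≤ a * (x + 1) ^ (a - 1) := add_one_rpow_sub_rpow_le (by linarith) ha
    _ ≤ a * (2 * x) ^ (a - 1) := by gcongr; linarith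
    _ = a * 2 ^ (a - 1) * x ^ (a - 1) := by rw [mul_rpow zero_le_two (by linarith), mul_assoc]

end Real

theorem floor_rpow_one_div_floor_rpow_le {p : ℝ} (hp : 0 < p) (n : ℕ) :
    ⌊(⌊(n : ℝ) ^ p⌋₊ : ℝ) ^ (1 / p)⌋₊ ≤ n := by
  refine Nat.floor_le_of_le ?_
  rw [one_div, rpow_inv_le_iff_of_pos (by positivity) (by positivity) hp]
  exact Nat.floor_le (by positivity)

theorem sub_floor_rpow_one_div_floor_rpow_le {p : ℝ} (hp0 : 0 < p) (hp1 : p ≤ 1) {n : ℕ}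
    (hk : 1 ≤ ⌊(n : ℝ) ^ p⌋₊) :
    (n : ℝ) - ⌊(⌊(n : ℝ) ^ p⌋₊ : ℝ) ^ (1 / p)⌋₊ ≤ (1 / p * 2 ^ (1 / p - 1) + 1) * n ^ (1 - p) := by
  set k := ⌊(n : ℝ) ^ p⌋₊
  have hn : (1 : ℝ) ≤ n := by
    have : n ≠ 0 := by rintro rfl; simp [k, zero_rpow hp0.ne'] at hk
    exact_mod_cast Nat.one_le_iff_ne_zero.2 this
  have hk1 : (1 : ℝ) ≤ k := by exact_mod_cast hk
  have hn_lt : (n : ℝ) < (k + 1) ^ (1 / p) := by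
    rw [one_div, lt_rpow_inv_iff_of_pos (by positivity) (by positivity) hp0]
    exact Nat.lt_floor_add_one _
  have hkn : (k : ℝ) ^ (1 / p - 1) ≤ n ^ (1 - p) := by
    calc (k : ℝ) ^ (1 / p - 1) ≤ ((n : ℝ) ^ p) ^ (1 / p - 1) := by
          gcongr
          · exact sub_nonneg.2 (one_le_one_div hp0 hp1)
          · exact Nat.floor_le (by positivity)
      _ = n ^ (1 - p) := by rw [← rpow_mul (by positivity)]; congr 1; field_simp
  have hone : (1 : ℝ) ≤ n ^ (1 - p) := one_le_rpow hn (by linarith)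
  have hgap := add_one_rpow_sub_rpow_le_mul_rpow hk1 (one_le_one_div hp0 hp1)
  have hfloor := Nat.sub_one_lt_floor ((k : ℝ) ^ (1 / p))
  have hcoef : 0 ≤ 1 / p * 2 ^ (1 / p - 1) := by positivity
  nlinarith [mul_le_mul_of_nonneg_left hkn hcoef]

theorem stmt19_general (τ : ℕ → ℕ)
    (p : ℝ) (hp0 : 0 < p) (hp1 : p ≤ 1)
    (ε : ℝ) (hε1 : ε < 1) (N : ℕ)
    (hsub : ∀ k : ℕ, N ≤ k →
      (τ ⌊((k : ℝ) ^ (1 / p))⌋₊ : ℝ) ≤ ε * (⌊((k : ℝ) ^ (1 / p))⌋₊ : ℝ))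
    (hgrowth : ∀ n, τ (n + 1) ≤ τ n + 1) :
    ∃ C' : ℝ, 0 < C' ∧ ∃ N' : ℕ, ∀ n : ℕ, N' ≤ n →
      (τ n : ℝ) ≤ ε * n + (1 - ε) * C' * (n : ℝ) ^ (1 - p) := by
  refine ⟨1 / p * 2 ^ (1 / p - 1) + 1, by positivity, ?_⟩
  have hk : Tendsto (fun n : ℕ ↦ ⌊(n : ℝ) ^ p⌋₊) atTop atTop :=
    tendsto_nat_floor_atTop.comp ((tendsto_rpow_atTop hp0).comp tendsto_natCast_atTop_atTop)
  obtain ⟨N', hN'⟩ := eventually_atTop.1 (hk.eventually_ge_atTop (max N 1))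
  refine ⟨N', fun n hn ↦ ?_⟩
  have hkN := hN' n hn
  calc (τ n : ℝ)
      ≤ ε * n + (1 - ε) * (n - ⌊(⌊(n : ℝ) ^ p⌋₊ : ℝ) ^ (1 / p)⌋₊) :=
        Nat.cast_apply_le_mul_add_sub hgrowth (floor_rpow_one_div_floor_rpow_le hp0 n)
          (hsub _ (le_of_max_le_left hkN))
    _ ≤ ε * n + (1 - ε) * ((1 / p * 2 ^ (1 / p - 1) + 1) * n ^ (1 - p)) := by
        gcongr
        exact sub_floor_rpow_one_div_floor_rpow_le hp0 hp1 (le_of_max_le_right hkN)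
    _ = _ := by ring

theorem stmt19 (τ : ℕ → ℕ) (hτn : ∀ n, τ n ≤ n)
    (p : ℝ) (hp0 : 0 < p) (hp1 : p ≤ 1)
    (C : ℝ) (hC : 0 < C) (ε : ℝ) (hε0 : 0 < ε) (hε1 : ε < 1) (N : ℕ)
    (hsub : ∀ k : ℕ, N ≤ k →
      (τ ⌊((k : ℝ) ^ (1 / p))⌋₊ : ℝ) ≤ ε * (⌊((k : ℝ) ^ (1 / p))⌋₊ : ℝ))
    (hgrowth : ∀ n, τ (n + 1) ≤ τ n + 1) :
    ∃ C' : ℝ, 0 < C' ∧ ∃ N' : ℕ, ∀ n : ℕ, N' ≤ n →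
      (τ n : ℝ) ≤ ε * n + (1 - ε) * C' * (n : ℝ) ^ (1 - p) :=
  stmt19_general τ p hp0 hp1 ε hε1 N hsub hgrowth
end
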